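/- arXiv:1309.6034 — 4 statements merged into one kernel-verified Lean document; each statement's English description precedes it below -/
import Mathlib

section
/- There exist a constant c > 0 and infinitely many positive integers n for which the following holds: there is a set W_n ⊆ {1, …, n} of squarefree positive integers such that for every function f : W_n → {-1, +1} there exists a positive integer a with |Σ_{b ∈ W_n, a ∣ b} f(b)| ≥ n^{c / log log n}. -/
/-!
The rows of the complement of the Fano plane form a 7 × 7 zero-one matrix `M` with
`Mᵀ M = 2 I + 2 J`, so `‖M x‖² ≥ 2 ‖x‖²`; its `t`-th tensor power therefore satisfies
`‖M^{⊗t} x‖² ≥ 2^t ‖x‖²`, and for every `x ∈ {±1}^{7^t}` some row has `|(M^{⊗t} x)_r| ≥ 2^{t/2}`.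
This set system is realised by homogeneous arithmetic progressions: label the pairs
`(j, i) ∈ Fin t × Fin 7` by distinct primes `p_{j,i} ≤ 4 (7t)²` (Chebyshev's bound on `π`), send a
column `c` to `∏_{M (i, c j) = 1} p_{j,i}` and a row `r` to the difference `∏_j p_{j, r j}`.
All these numbers are squarefree and at most `n = (4 (7t)²)^{7t}`; as `log n ≍ t log t` and
`log log n ≍ log t`, the bound `2^{t/2}` is at least `n^{c / log log n}` for a small absolute `c`.
-/

open Finset Matrix
open scoped Kronecker Nat.Prime

namespace Nat

theorem lcmUpto_le_pow_primeCounting (n : ℕ) : lcmUpto n ≤ n ^ π n := by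
  rw [lcmUpto_eq_prod_pow_log, ← primesLE_card_eq_primeCounting, ← prod_const]
  refine prod_le_prod' fun p hp => pow_log_le_self p ?_
  have := one_lt_of_mem_primesLE hp
  have := le_of_mem_primesLE hp
  omega

theorem two_pow_le_succ_pow_primeCounting_succ (n : ℕ) : 2 ^ n ≤ (n + 1) ^ (π n + 1) :=
  calc 2 ^ n ≤ (n + 1) * lcmUpto n := Chebyshev.two_pow_le_mul_lcmUpto n
    _ ≤ (n + 1) * (n + 1) ^ π n := by
      gcongr
      exact (lcmUpto_le_pow_primeCounting n).trans (Nat.pow_le_pow_left n.le_succ _)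
    _ = (n + 1) ^ (π n + 1) := by ring

theorem le_primeCounting_four_mul_sq (k : ℕ) : k ≤ π (4 * k ^ 2) := by
  by_contra! hk
  have hbase : 4 * k ^ 2 + 1 < 16 ^ k := by
    have h : k + 1 ≤ 2 ^ k := Nat.lt_two_pow_self
    rw [show 16 ^ k = (2 ^ k) ^ 4 by rw [← pow_mul, mul_comm, pow_mul]; norm_num]
    nlinarith [Nat.pow_le_pow_left h 4]
  have := calc 2 ^ (4 * k ^ 2) ≤ (4 * k ^ 2 + 1) ^ (π (4 * k ^ 2) + 1) :=
        two_pow_le_succ_pow_primeCounting_succ _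
    _ ≤ (4 * k ^ 2 + 1) ^ k := Nat.pow_le_pow_right (by omega) hk
    _ < (16 ^ k) ^ k := Nat.pow_lt_pow_left hbase (by omega)
    _ = 2 ^ (4 * k ^ 2) := by
      rw [← pow_mul, show (16 : ℕ) = 2 ^ 4 by norm_num, ← pow_mul]; ring_nf
  exact lt_irrefl _ this

theorem exists_injective_prime_le {α : Type*} [Fintype α] {B : ℕ}
    (h : Fintype.card α ≤ π B) :
    ∃ q : α → ℕ, Function.Injective q ∧ ∀ x, (q x).Prime ∧ q x ≤ B := by
  obtain ⟨e⟩ := Function.Embedding.nonempty_of_card_le (β := primesLE B)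
    (by simpa [primesLE_card_eq_primeCounting] using h)
  exact ⟨fun x => e x, Subtype.val_injective.comp e.injective,
    fun x => (mem_primesLE.mp (e x).2).symm⟩

end Nat

section PrimeLabels

variable {α : Type*} {q : α → ℕ}

theorem prod_primes_dvd_prod_primes_iff (hq : Function.Injective q) (hp : ∀ x, (q x).Prime)
    {s t : Finset α} : (∏ x ∈ s, q x) ∣ ∏ x ∈ t, q x ↔ s ⊆ t := by
  refine ⟨fun h x hx => ?_, prod_dvd_prod_of_subset s t q⟩
  obtain ⟨y, hy, hxy⟩ := ((hp x).prime.dvd_finsetProd_iff _).mp ((dvd_prod_of_mem q hx).trans h)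
  rwa [hq ((Nat.prime_dvd_prime_iff_eq (hp x) (hp y)).mp hxy)]

theorem squarefree_prod_primes (hq : Function.Injective q) (hp : ∀ x, (q x).Prime)
    (s : Finset α) : Squarefree (∏ x ∈ s, q x) :=
  squarefree_prod_of_pairwise_isCoprime
    (fun x _ y _ hxy => Nat.coprime_iff_isRelPrime.mp <|
      (Nat.coprime_primes (hp x) (hp y)).mpr (hq.ne hxy))
    fun x _ => (hp x).squarefree

end PrimeLabels

def relMatrix {R : Type*} [Zero R] [One R] {m n : Type*} (r : m → n → Prop)
    [∀ i j, Decidable (r i j)] : Matrix m n R :=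
  of fun i j => if r i j then 1 else 0

def tensorPow {R : Type*} [CommMonoid R] {m n : Type*} (A : Matrix m n R) (t : ℕ) :
    Matrix (Fin t → m) (Fin t → n) R :=
  of fun r c => ∏ j, A (r j) (c j)

theorem tensorPow_succ {R : Type*} [CommSemiring R] {m n : Type*} (A : Matrix m n R) (t : ℕ) :
    tensorPow A (t + 1) =
      reindex (Fin.consEquiv fun _ => m) (Fin.consEquiv fun _ => n) (A ⊗ₖ tensorPow A t) := by
  ext r c
  simp [tensorPow, Fin.prod_univ_succ, Fin.consEquiv, Fin.tail]

theorem kronecker_mulVec_apply {R : Type*} [CommSemiring R] {l m n p : Type*} [Fintype m]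
    [Fintype p] (A : Matrix l m R) (B : Matrix n p R) (x : m × p → R) (i : l) (k : n) :
    (A ⊗ₖ B *ᵥ x) (i, k) = (A *ᵥ fun j => (B *ᵥ fun j' => x (j, j')) k) i := by
  simp only [mulVec, dotProduct, kronecker_apply, Fintype.sum_prod_type, mul_sum, mul_assoc]

theorem mulVec_dotProduct_self_eq {R : Type*} [CommRing R] {m n : Type*} [Fintype m] [Fintype n]
    [DecidableEq n] {A : Matrix m n R} {a b : R} (hA : Aᵀ * A = a • 1 + b • of fun _ _ => 1)
    (x : n → R) : A *ᵥ x ⬝ᵥ A *ᵥ x = a * (x ⬝ᵥ x) + b * (∑ j, x j) ^ 2 := by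
  rw [dotProduct_mulVec, ← mulVec_transpose, mulVec_mulVec, hA, add_mulVec, smul_mulVec,
    smul_mulVec, one_mulVec, add_dotProduct, smul_dotProduct, smul_dotProduct]
  simp [mulVec, dotProduct, sq, sum_mul, mul_comm]

section SquareNormBound

variable {R : Type*} [CommRing R] [LinearOrder R] {l m n p : Type*} [Fintype l] [Fintype m]

theorem reindex_mulVec_dotProduct_self_ge {l' m' : Type*} [Fintype l'] [Fintype m']
    {A : Matrix l m R} {a : R} (hA : ∀ x, a * (x ⬝ᵥ x) ≤ A *ᵥ x ⬝ᵥ A *ᵥ x)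
    (e₁ : l ≃ l') (e₂ : m ≃ m') (x : m' → R) :
    a * (x ⬝ᵥ x) ≤ reindex e₁ e₂ A *ᵥ x ⬝ᵥ reindex e₁ e₂ A *ᵥ x := by
  simpa [reindex_apply, submatrix_mulVec_equiv, comp_equiv_symm_dotProduct, Function.comp_assoc]
    using hA (x ∘ e₂)

variable [IsStrictOrderedRing R] [Fintype n] [Fintype p]

theorem kronecker_mulVec_dotProduct_self_ge {A : Matrix l m R} {B : Matrix n p R} {a b : R}
    (ha : 0 ≤ a) (hA : ∀ x, a * (x ⬝ᵥ x) ≤ A *ᵥ x ⬝ᵥ A *ᵥ x)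
    (hB : ∀ y, b * (y ⬝ᵥ y) ≤ B *ᵥ y ⬝ᵥ B *ᵥ y) (x : m × p → R) :
    a * b * (x ⬝ᵥ x) ≤ A ⊗ₖ B *ᵥ x ⬝ᵥ A ⊗ₖ B *ᵥ x := by
  set y : m → n → R := fun j => B *ᵥ fun j' => x (j, j')
  calc a * b * (x ⬝ᵥ x) = a * ∑ j, b * ((fun j' => x (j, j')) ⬝ᵥ fun j' => x (j, j')) := by
        rw [mul_assoc, ← mul_sum]; simp only [dotProduct, Fintype.sum_prod_type]
    _ ≤ a * ∑ j, y j ⬝ᵥ y j := by gcongr with j; exact hB _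
    _ = ∑ k, a * ((fun j => y j k) ⬝ᵥ fun j => y j k) := by
        simp only [dotProduct, mul_sum]; exact sum_comm
    _ ≤ ∑ k, (A *ᵥ fun j => y j k) ⬝ᵥ A *ᵥ fun j => y j k := by gcongr with k; exact hA _
    _ = A ⊗ₖ B *ᵥ x ⬝ᵥ A ⊗ₖ B *ᵥ x := by
        simp only [dotProduct, Fintype.sum_prod_type, kronecker_mulVec_apply]
        exact sum_comm

theorem tensorPow_mulVec_dotProduct_self_ge {A : Matrix m n R} {a : R} (ha : 0 ≤ a)
    (hA : ∀ x, a * (x ⬝ᵥ x) ≤ A *ᵥ x ⬝ᵥ A *ᵥ x) (t : ℕ) (x : (Fin t → n) → R) :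
    a ^ t * (x ⬝ᵥ x) ≤ tensorPow A t *ᵥ x ⬝ᵥ tensorPow A t *ᵥ x := by
  induction t with
  | zero => simp [tensorPow, mulVec, dotProduct]
  | succ t ih =>
    rw [tensorPow_succ, pow_succ']
    exact reindex_mulVec_dotProduct_self_ge (kronecker_mulVec_dotProduct_self_ge ha hA ih) _ _ x

theorem exists_le_sq_mulVec_apply [Nonempty n] {A : Matrix n n R} {a : R}
    (hA : ∀ x, a * (x ⬝ᵥ x) ≤ A *ᵥ x ⬝ᵥ A *ᵥ x) {x : n → R} (hx : ∀ i, x i ^ 2 = 1) :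
    ∃ i, a ≤ (A *ᵥ x) i ^ 2 := by
  have hsum : ∑ _i : n, a ≤ ∑ i, (A *ᵥ x) i ^ 2 := by
    simpa [dotProduct, ← sq, hx, mul_comm] using hA x
  obtain ⟨i, -, hi⟩ := exists_le_of_sum_le univ_nonempty hsum
  exact ⟨i, hi⟩

end SquareNormBound

section TensorEncoding

variable {ι : Type*} [Fintype ι] {R : ι → ι → Prop} [DecidableRel R] {t : ℕ}
  {q : Fin t × ι → ℕ}

variable (R q) in
def tensorElement (c : Fin t → ι) : ℕ :=
  ∏ x ∈ univ.filter (fun x : Fin t × ι => R x.2 (c x.1)), q x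

variable (q) in
def tensorModulus [DecidableEq ι] (r : Fin t → ι) : ℕ :=
  ∏ x ∈ univ.image (fun j => (j, r j)), q x

theorem tensorElement_le (hp : ∀ x, (q x).Prime) {B : ℕ} (hB : ∀ x, q x ≤ B) (c : Fin t → ι) :
    tensorElement R q c ≤ B ^ (t * Fintype.card ι) :=
  calc tensorElement R q c ≤ ∏ x, q x :=
        prod_le_prod_of_subset_of_one_le' (filter_subset _ _) fun x _ _ => (hp x).one_le
    _ ≤ ∏ _x : Fin t × ι, B := prod_le_prod' fun x _ => hB x
    _ = B ^ (t * Fintype.card ι) := by simp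

variable (hq : Function.Injective q) (hp : ∀ x, (q x).Prime)
include hq hp

theorem tensorModulus_dvd_tensorElement_iff [DecidableEq ι] (r c : Fin t → ι) :
    tensorModulus q r ∣ tensorElement R q c ↔ ∀ j, R (r j) (c j) := by
  simp [tensorModulus, tensorElement, prod_primes_dvd_prod_primes_iff hq hp, image_subset_iff]

theorem tensorElement_injective (hR : ∀ i i', (∀ k, R k i ↔ R k i') → i = i') :
    Function.Injective (tensorElement R q) := by
  intro c c' h
  have hfilter := ((prod_primes_dvd_prod_primes_iff hq hp).mp (dvd_of_eq h)).antisymm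
    ((prod_primes_dvd_prod_primes_iff hq hp).mp (dvd_of_eq h.symm))
  funext j
  exact hR _ _ fun k => by simpa using congrArg (fun s => (j, k) ∈ s) hfilter

theorem sum_filter_tensorModulus_dvd [DecidableEq ι] (hR : ∀ i i', (∀ k, R k i ↔ R k i') → i = i')
    (f : ℕ → ℝ) (r : Fin t → ι) :
    ∑ b ∈ (univ.image (tensorElement R q)).filter (fun b => tensorModulus q r ∣ b), f b =
      (tensorPow (relMatrix R) t *ᵥ (f ∘ tensorElement R q)) r := by
  rw [filter_image, sum_image (tensorElement_injective hq hp hR).injOn, sum_filter]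
  simp [mulVec, dotProduct, tensorPow, relMatrix, prod_boole,
    tensorModulus_dvd_tensorElement_iff hq hp]

end TensorEncoding

theorem exists_squarefree_hap_discrepancy_ge {ι : Type*} [Fintype ι] [DecidableEq ι] [Nonempty ι]
    {R : ι → ι → Prop} [DecidableRel R] (hR : ∀ i i', (∀ k, R k i ↔ R k i') → i = i') {a : ℝ}
    (ha : 0 ≤ a) (hA : ∀ x, a * (x ⬝ᵥ x) ≤ relMatrix R *ᵥ x ⬝ᵥ relMatrix R *ᵥ x) (t : ℕ) :
    ∃ W : Finset ℕ, (∀ b ∈ W, b ∈ Icc 1 ((4 * (t * Fintype.card ι) ^ 2) ^ (t * Fintype.card ι)) ∧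
        Squarefree b) ∧
      ∀ f : ℕ → ℝ, (∀ b ∈ W, f b = 1 ∨ f b = -1) →
        ∃ d : ℕ, 0 < d ∧ a ^ t ≤ (∑ b ∈ W.filter (fun b => d ∣ b), f b) ^ 2 := by
  obtain ⟨q, hq, hqB⟩ := Nat.exists_injective_prime_le (α := Fin t × ι)
    (by simpa using Nat.le_primeCounting_four_mul_sq (t * Fintype.card ι))
  have hp x := (hqB x).1
  refine ⟨univ.image (tensorElement R q), ?_, fun f hf => ?_⟩
  · simp only [mem_image, mem_univ, true_and, forall_exists_index, forall_apply_eq_imp_iff]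
    exact fun c => ⟨mem_Icc.mpr ⟨prod_pos fun x _ => (hp x).pos,
      tensorElement_le hp (fun x => (hqB x).2) c⟩, squarefree_prod_primes hq hp _⟩
  have hsign c : (f ∘ tensorElement R q) c ^ 2 = 1 := by
    rcases hf _ (mem_image_of_mem _ (mem_univ c)) with h | h <;> simp [h]
  obtain ⟨r, hr⟩ := exists_le_sq_mulVec_apply (tensorPow_mulVec_dotProduct_self_ge ha hA t) hsign
  exact ⟨tensorModulus q r, prod_pos fun x _ => (hp x).pos,
    by rwa [sum_filter_tensorModulus_dvd hq hp hR]⟩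

-- `{0, 1, 4, 6}` is a `(7, 4, 2)` difference set in `ℤ/7ℤ`, whence `Mᵀ M = 2 I + 2 J`.
def fanoComplement (i j : Fin 7) : Prop := j - i ∈ ({0, 1, 4, 6} : Finset (Fin 7))

instance : DecidableRel fanoComplement := fun _ _ => inferInstanceAs (Decidable (_ ∈ _))

theorem fanoComplement_col_injective (j j' : Fin 7)
    (h : ∀ i, fanoComplement i j ↔ fanoComplement i j') : j = j' := by
  revert j j'; decide

theorem transpose_mul_relMatrix_fanoComplement :
    (relMatrix fanoComplement : Matrix (Fin 7) (Fin 7) ℝ)ᵀ * relMatrix fanoComplement =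
      (2 : ℝ) • 1 + (2 : ℝ) • of fun _ _ => 1 := by
  have h : ∀ j j' : Fin 7,
      #{i | fanoComplement i j ∧ fanoComplement i j'} = if j = j' then 4 else 2 := by
    decide
  ext j j'
  simp only [mul_apply, transpose_apply, relMatrix, of_apply, ite_zero_mul_ite_zero, mul_one,
    sum_boole, h]
  simp [one_apply]
  split_ifs <;> norm_num

theorem two_mul_dotProduct_self_le_relMatrix_fanoComplement (x : Fin 7 → ℝ) :
    2 * (x ⬝ᵥ x) ≤ relMatrix fanoComplement *ᵥ x ⬝ᵥ relMatrix fanoComplement *ᵥ x := by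
  rw [mulVec_dotProduct_self_eq transpose_mul_relMatrix_fanoComplement]
  exact le_add_of_nonneg_right (by positivity)

open Real

theorem four_mul_sq_pow_rpow_div_log_log_le {m : ℕ} (hm : 4 ≤ m) {c : ℝ} (hc : 0 ≤ c) :
    (((4 * m ^ 2) ^ m : ℕ) : ℝ) ^ (c / log (log ((4 * m ^ 2) ^ m : ℕ))) ≤ exp (3 * c * m) := by
  have hm' : (4 : ℝ) ≤ m := by exact_mod_cast hm
  have hbase : 1 ≤ log (4 * m ^ 2 : ℝ) := by
    rw [le_log_iff_exp_le (by positivity)]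
    nlinarith [exp_one_lt_d9]
  have hbase' : log (4 * m ^ 2 : ℝ) ≤ 3 * log m := by
    rw [show 3 * log (m : ℝ) = log (m ^ 3) by rw [log_pow]; norm_num]
    exact log_le_log (by positivity) (by nlinarith)
  have hlogm : 0 < log m := log_pos (by linarith)
  have hloglog : log m ≤ log (m * log (4 * m ^ 2)) :=
    log_le_log (by positivity) (by nlinarith)
  have hlogn : log ((4 * m ^ 2) ^ m : ℕ) = m * log (4 * m ^ 2) := by push_cast; rw [log_pow]
  rw [rpow_def_of_pos (by positivity), exp_le_exp, hlogn, mul_div_assoc',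
    div_le_iff₀ (by linarith)]
  calc m * log (4 * m ^ 2) * c ≤ m * (3 * log m) * c := by gcongr
    _ = 3 * c * m * log m := by ring
    _ ≤ 3 * c * m * log (m * log (4 * m ^ 2)) := by gcongr

/-- There exist a constant `c > 0` and infinitely many positive
integers `n` such that there is a set `Wₙ ⊆ {1, …, n}` of squarefree positive
integers so that for every `f : Wₙ → {-1, +1}` there is a positive integer `a`
with `|∑_{b ∈ Wₙ, a ∣ b} f(b)| ≥ n^{c / log log n}`. -/
theorem hereditary_discrepancy_HAP_lower_bound :
    ∃ c : ℝ, 0 < c ∧ ∀ N : ℕ, ∃ n : ℕ, N ≤ n ∧ 0 < n ∧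
      ∃ W : Finset ℕ, (∀ b ∈ W, b ∈ Finset.Icc 1 n ∧ Squarefree b) ∧
        ∀ f : ℕ → ℝ, (∀ b ∈ W, f b = 1 ∨ f b = -1) →
          ∃ a : ℕ, 0 < a ∧
            (n : ℝ) ^ (c / Real.log (Real.log n)) ≤
              |∑ b ∈ W.filter (fun b => a ∣ b), f b| := by
  refine ⟨log 2 / 42, by positivity, fun N => ?_⟩
  obtain ⟨W, hW, hdisc⟩ := exists_squarefree_hap_discrepancy_ge fanoComplement_col_injective
    zero_le_two two_mul_dotProduct_self_le_relMatrix_fanoComplement (N + 1)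
  set m := (N + 1) * Fintype.card (Fin 7)
  have hm : m = 7 * (N + 1) := by simp [m, mul_comm]
  have hNn : N ≤ (4 * m ^ 2) ^ m :=
    calc N ≤ m := by omega
      _ ≤ 4 * m ^ 2 := by nlinarith
      _ ≤ (4 * m ^ 2) ^ m := Nat.le_self_pow (by omega) _
  refine ⟨(4 * m ^ 2) ^ m, hNn, by positivity, W, hW, fun f hf => ?_⟩
  obtain ⟨a, ha, hsq⟩ := hdisc f hf
  refine ⟨a, ha, (four_mul_sq_pow_rpow_div_log_log_le (by omega) (by positivity)).trans ?_⟩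
  have hexp : exp (3 * (log 2 / 42) * m) ^ 2 = 2 ^ (N + 1) :=
    calc exp (3 * (log 2 / 42) * m) ^ 2 = exp ((N + 1 : ℕ) * log 2) := by
          rw [← exp_nat_mul, hm]; push_cast; ring_nf
      _ = 2 ^ (N + 1) := by rw [exp_nat_mul, exp_log two_pos]
  rw [← abs_of_pos (exp_pos _), ← sq_le_sq, hexp]
  exact hsq
end

section
/- For any real m × n matrix A, the hereditary discrepancy of A satisfies herdisc(A) ≥ (1/2) · max_k max_B |det(B)|^{1/k}, where for each k the matrix B ranges over all k × k submatrices of A. -/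
/-!
If every set of columns of `A` has a `±1` colouring with discrepancy at most `D`, then every
`x ∈ [0,1]^n` can be rounded to some `z ∈ {0,1}^n` with `‖A (x - z)‖∞ ≤ D`: for dyadic `x`,
colour the entries with odd last binary digit to clear that digit and recurse, and pass to
arbitrary `x` by closedness. For a nonsingular `k × k` submatrix `B`, this says that translates
of the cube `[-D, D]^k` by the lattice `B ℤ^k` cover `ℝ^k`, so `(2D)^k ≥ |det B|`.
-/

/-- The discrepancy of a real matrix `A`:
`disc(A) = min_{x ∈ {-1,+1}^n} ‖Ax‖_∞`. -/
noncomputable def matDisc {m n : Type*} [Fintype m] [Fintype n]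
    (A : Matrix m n ℝ) : ℝ :=
  sInf {D : ℝ | ∃ x : n → ℝ, (∀ i, x i = 1 ∨ x i = -1) ∧
    D = ⨆ j : m, |∑ i, A j i * x i|}

/-- The hereditary discrepancy of a real matrix `A`:
`herdisc(A) = max_{W ⊆ columns} disc(A|_W)`, where `A|_W` is the submatrix of
columns indexed by `W`. -/
noncomputable def matHerDisc {m n : Type*} [Fintype m] [Fintype n]
    (A : Matrix m n ℝ) : ℝ :=
  sSup {D : ℝ | ∃ W : Finset n,
    D = matDisc (A.submatrix id (fun i : {x // x ∈ W} => i.1))}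

open Matrix MeasureTheory Set Filter Topology
open scoped Pointwise

section discrepancy

variable {ι κ : Type*}

def HerDiscLE (M : Matrix ι κ ℝ) (D : ℝ) : Prop :=
  ∀ W : Finset κ, ∃ s : κ → ℤ, (∀ i, s i = 1 ∨ s i = -1) ∧ ∀ j, |∑ i ∈ W, M j i * s i| ≤ D

theorem HerDiscLE.submatrix {ι' κ' : Type*} {M : Matrix ι κ ℝ} {D : ℝ} (hM : HerDiscLE M D)
    (r : ι' → ι) {c : κ' → κ} (hc : Function.Injective c) : HerDiscLE (M.submatrix r c) D := by
  intro W
  obtain ⟨s, hs, hbound⟩ := hM (W.map ⟨c, hc⟩)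
  exact ⟨s ∘ c, fun i => hs (c i), fun j => by simpa using hbound (r j)⟩

theorem matDisc_nonneg [Fintype ι] [Fintype κ] (M : Matrix ι κ ℝ) : 0 ≤ matDisc M :=
  Real.sInf_nonneg fun _ ⟨_, _, hD⟩ => hD ▸ Real.iSup_nonneg fun _ => abs_nonneg _

theorem matHerDisc_nonneg [Fintype ι] [Fintype κ] (M : Matrix ι κ ℝ) : 0 ≤ matHerDisc M :=
  Real.sSup_nonneg fun _ ⟨_, hD⟩ => hD ▸ matDisc_nonneg _

theorem exists_signs_matDisc_eq [Fintype ι] [Fintype κ] (M : Matrix ι κ ℝ) :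
    ∃ x : κ → ℝ, (∀ i, x i = 1 ∨ x i = -1) ∧ matDisc M = ⨆ j, |∑ i, M j i * x i| := by
  set S := {D : ℝ | ∃ x : κ → ℝ, (∀ i, x i = 1 ∨ x i = -1) ∧ D = ⨆ j, |∑ i, M j i * x i|}
  have hfin : S.Finite := by
    refine ((Set.Finite.pi fun _ => toFinite ({1, -1} : Set ℝ)).image
      fun x => ⨆ j, |∑ i, M j i * x i|).subset ?_
    rintro _ ⟨x, hx, rfl⟩
    exact ⟨x, by simpa [Set.mem_pi] using hx, rfl⟩
  have hne : S.Nonempty := ⟨_, fun _ => 1, fun _ => Or.inl rfl, rfl⟩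
  obtain ⟨x, hx, hdisc⟩ := hne.csInf_mem hfin
  exact ⟨x, hx, hdisc⟩

theorem matDisc_le_matHerDisc [Fintype ι] [Fintype κ] (M : Matrix ι κ ℝ) (W : Finset κ) :
    matDisc (M.submatrix id fun i : W => i.1) ≤ matHerDisc M := by
  refine le_csSup ((finite_range fun W : Finset κ =>
    matDisc (M.submatrix id fun i : W => i.1)).subset ?_).bddAbove ⟨W, rfl⟩
  rintro _ ⟨W, rfl⟩
  exact ⟨W, rfl⟩

theorem herDiscLE_matHerDisc [Fintype ι] [Fintype κ] (M : Matrix ι κ ℝ) :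
    HerDiscLE M (matHerDisc M) := by
  classical
  intro W
  obtain ⟨x, hx, hdisc⟩ := exists_signs_matDisc_eq (M.submatrix id fun i : W => i.1)
  set χ : κ → ℤ := fun i => if h : i ∈ W then (if x ⟨i, h⟩ = 1 then 1 else -1) else 1 with hχ
  have hχW : ∀ i : W, (χ i : ℝ) = x i := fun i => by
    rcases hx i with h | h <;> norm_num [hχ, h]
  refine ⟨χ, fun i => by simp only [hχ]; split_ifs <;> simp, fun j => ?_⟩
  calc |∑ i ∈ W, M j i * χ i| = |∑ i : W, M j i * x i| := by
        rw [← Finset.sum_coe_sort W]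
        simp only [hχW]
    _ ≤ matDisc (M.submatrix id fun i : W => i.1) :=
        hdisc ▸ le_ciSup (f := fun j => |∑ i : W, M j i * x i|) (Finite.bddAbove_range _) j
    _ ≤ matHerDisc M := matDisc_le_matHerDisc M W

end discrepancy

section rounding

variable {ι κ : Type*} [Fintype κ] {M : Matrix ι κ ℝ} {D : ℝ}

theorem HerDiscLE.exists_dyadic_rounding (hM : HerDiscLE M D) (t : ℕ) (a : κ → ℤ)
    (ha : ∀ i, 0 ≤ a i ∧ a i ≤ 2 ^ t) :
    ∃ z : κ → ℤ, (∀ i, z i = 0 ∨ z i = 1) ∧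
      ∀ j, |(M *ᵥ fun i => ((a i - 2 ^ t * z i : ℤ) : ℝ)) j| ≤ (2 ^ t - 1) * D := by
  induction t generalizing a with
  | zero => exact ⟨a, fun i => by have := ha i; omega, fun j => by simp [mulVec, dotProduct]⟩
  | succ t ih =>
    classical
    obtain ⟨s, hs, hbound⟩ := hM {i | Odd (a i)}
    -- Adding `σ` makes every entry of `a` even, so `(a + σ) / 2` has one binary digit fewer.
    set σ : κ → ℤ := fun i => if Odd (a i) then s i else 0 with hσ
    have hhalf : ∀ i, 2 ∣ a i + σ i ∧ 0 ≤ a i + σ i ∧ a i + σ i ≤ 2 * 2 ^ t := fun i => by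
      have := ha i
      rw [pow_succ'] at this
      by_cases hodd : Odd (a i)
      · rcases hs i with h | h <;> simp only [hσ, hodd, if_true, h] <;>
          rw [Int.odd_iff] at hodd <;> omega
      · simp only [hσ, hodd, if_false]
        rw [Int.not_odd_iff] at hodd
        omega
    set a' : κ → ℤ := fun i => (a i + σ i) / 2
    have ha' : ∀ i, 2 * a' i = a i + σ i := fun i => Int.mul_ediv_cancel' (hhalf i).1
    obtain ⟨z, hz, hz_bound⟩ := ih a' fun i => by have := hhalf i; have := ha' i; omega
    refine ⟨z, hz, fun j => ?_⟩
    have hsplit : (fun i => ((a i - 2 ^ (t + 1) * z i : ℤ) : ℝ)) =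
        (2 : ℝ) • (fun i => ((a' i - 2 ^ t * z i : ℤ) : ℝ)) - fun i => (σ i : ℝ) := by
      funext i
      have : a i - 2 ^ (t + 1) * z i = 2 * (a' i - 2 ^ t * z i) - σ i := by
        rw [pow_succ']; linarith [ha' i]
      simp only [this, Pi.sub_apply, Pi.smul_apply, smul_eq_mul]
      push_cast
      ring
    have hσrow : (M *ᵥ fun i => (σ i : ℝ)) j = ∑ i ∈ {i | Odd (a i)}, M j i * s i := by
      simp only [mulVec, dotProduct, hσ, Finset.sum_filter]
      exact Finset.sum_congr rfl fun i _ => by split_ifs <;> simp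
    rw [hsplit, mulVec_sub, mulVec_smul, Pi.sub_apply, Pi.smul_apply, smul_eq_mul, hσrow]
    calc |2 * (M *ᵥ fun i => ((a' i - 2 ^ t * z i : ℤ) : ℝ)) j - ∑ i ∈ {i | Odd (a i)}, M j i * s i|
        ≤ 2 * |(M *ᵥ fun i => ((a' i - 2 ^ t * z i : ℤ) : ℝ)) j| +
            |∑ i ∈ {i | Odd (a i)}, M j i * s i| := by
          exact (abs_sub _ _).trans_eq (by rw [abs_mul, abs_two])
      _ ≤ 2 * ((2 ^ t - 1) * D) + D := by gcongr; exacts [hz_bound j, hbound j]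
      _ = (2 ^ (t + 1) - 1) * D := by ring

theorem HerDiscLE.exists_rounding (hM : HerDiscLE M D) (hD : 0 ≤ D) (x : κ → ℝ)
    (hx : ∀ i, x i ∈ Icc 0 1) :
    ∃ z : κ → ℤ, (∀ i, z i = 0 ∨ z i = 1) ∧ ∀ j, |(M *ᵥ (x - fun i => (z i : ℝ))) j| ≤ D := by
  set Z : Set (κ → ℤ) := univ.pi fun _ => {0, 1}
  set C : Set (κ → ℝ) := ⋃ z ∈ Z, {y | ∀ j, |(M *ᵥ (y - fun i => (z i : ℝ))) j| ≤ D}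
  suffices x ∈ C by simpa [C, Z, Set.mem_pi] using this
  have hC : IsClosed C := by
    refine (Set.Finite.pi fun _ => toFinite _).isClosed_biUnion fun z _ => ?_
    simp only [ofPred_forall]
    exact isClosed_iInter fun j => isClosed_le (by fun_prop) continuous_const
  -- Dyadic truncations of `x` lie in `C` and converge to `x`.
  set u : ℕ → κ → ℝ := fun t i => ⌊x i * 2 ^ t⌋₊ / 2 ^ t
  have hu : Tendsto u atTop (𝓝 x) := tendsto_pi_nhds.2 fun i =>
    (tendsto_nat_floor_mul_div_atTop (hx i).1).comp
      (tendsto_pow_atTop_atTop_of_one_lt one_lt_two)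
  have huC : ∀ t, u t ∈ C := by
    intro t
    have h2t : (0 : ℝ) < 2 ^ t := by positivity
    obtain ⟨z, hz, hbound⟩ := hM.exists_dyadic_rounding t (fun i => ⌊x i * 2 ^ t⌋₊) fun i =>
      ⟨by positivity, by exact_mod_cast Nat.floor_le_of_le (by nlinarith [(hx i).2])⟩
    refine mem_biUnion (x := z) (by simpa [Z, Set.mem_pi] using hz) fun j => ?_
    have hscale : u t - (fun i => (z i : ℝ)) =
        ((2 : ℝ) ^ t)⁻¹ • fun i => ((⌊x i * 2 ^ t⌋₊ - 2 ^ t * z i : ℤ) : ℝ) := by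
      funext i
      simp only [u, Pi.sub_apply, Pi.smul_apply, smul_eq_mul]
      push_cast
      field_simp
    rw [hscale, mulVec_smul, Pi.smul_apply, smul_eq_mul, abs_mul, abs_of_pos (inv_pos.2 h2t)]
    calc ((2 : ℝ) ^ t)⁻¹ * |(M *ᵥ fun i => ((⌊x i * 2 ^ t⌋₊ - 2 ^ t * z i : ℤ) : ℝ)) j|
        ≤ ((2 : ℝ) ^ t)⁻¹ * ((2 ^ t - 1) * D) := by gcongr; exact hbound j
      _ ≤ D := by
          rw [inv_mul_le_iff₀ h2t]
          nlinarith
  exact hC.mem_of_tendsto hu (Eventually.of_forall huC)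

theorem HerDiscLE.exists_intVec_near (hM : HerDiscLE M D) (hD : 0 ≤ D) (x : κ → ℝ) :
    ∃ v : κ → ℤ, ∀ j, |(M *ᵥ (x - fun i => (v i : ℝ))) j| ≤ D := by
  obtain ⟨z, -, hz⟩ := hM.exists_rounding hD (fun i => Int.fract (x i)) fun i =>
    ⟨Int.fract_nonneg _, (Int.fract_lt_one _).le⟩
  refine ⟨fun i => ⌊x i⌋ + z i, fun j => ?_⟩
  have hfract : x - (fun i => ((⌊x i⌋ + z i : ℤ) : ℝ)) =
      (fun i => Int.fract (x i)) - fun i => (z i : ℝ) := by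
    funext i
    simp only [Pi.sub_apply, Int.fract]
    push_cast
    ring
  exact hfract ▸ hz j

end rounding

theorem MeasureTheory.IsAddFundamentalDomain.measure_le_of_iUnion_vadd_eq_univ {G α : Type*}
    [AddGroup G] [AddAction G α] [MeasurableSpace α] {μ : Measure α} [MeasurableConstVAdd G α]
    [VAddInvariantMeasure G α μ] [Countable G] {s t : Set α}
    (hs : IsAddFundamentalDomain G s μ) (ht : ⋃ g : G, g +ᵥ t = univ) : μ s ≤ μ t :=
  calc μ s = μ (⋃ g : G, (g +ᵥ t) ∩ s) := by rw [← iUnion_inter, ht, univ_inter]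
    _ ≤ ∑' g : G, μ ((g +ᵥ t) ∩ s) := measure_iUnion_le _
    _ = μ t := (hs.measure_eq_tsum t).symm

theorem Matrix.abs_det_le_of_forall_exists_intVec_near {κ : Type*} [Fintype κ] [DecidableEq κ]
    (B : Matrix κ κ ℝ) {D : ℝ} (hD : 0 ≤ D)
    (hnear : ∀ x : κ → ℝ, ∃ v : κ → ℤ, ∀ j, |(B *ᵥ (x - fun i => (v i : ℝ))) j| ≤ D) :
    |B.det| ≤ (2 * D) ^ Fintype.card κ := by
  rcases eq_or_ne B.det 0 with hdet | hdet
  · rw [hdet, abs_zero]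
    positivity
  -- Translates of the cube `[-D, D]^κ` by the lattice spanned by the columns of `B` cover
  -- space, so the cube is at least as large as a fundamental domain, of volume `|det B|`.
  set e := B.toLinearEquiv' (B.invertibleOfIsUnitDet hdet.isUnit)
  have he : ∀ x, e x = B *ᵥ x := fun _ => rfl
  set b := (Pi.basisFun ℝ κ).map e
  set L := (Submodule.span ℤ (range b)).toAddSubgroup
  have : Countable L := inferInstanceAs (Countable (Submodule.span ℤ (range b)))
  set Q : Set (κ → ℝ) := Icc (fun _ => -D) fun _ => D
  have hcover : ⋃ g : L, g +ᵥ Q = univ := by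
    refine eq_univ_of_forall fun y => mem_iUnion.2 ?_
    obtain ⟨v, hv⟩ := hnear (B⁻¹ *ᵥ y)
    have hvL : B *ᵥ (fun i => (v i : ℝ)) ∈ L := by
      refine (b.mem_span_iff_repr_mem ℤ _).2 fun i => ⟨v i, ?_⟩
      simp [b, ← he]
    have hdist : ∀ j, |y j - (B *ᵥ fun i => (v i : ℝ)) j| ≤ D := fun j => by
      simpa [mulVec_sub, mulVec_mulVec, mul_nonsing_inv _ hdet.isUnit] using hv j
    refine ⟨⟨_, hvL⟩, mem_vadd_set_iff_neg_vadd_mem.2 ⟨fun j => ?_, fun j => ?_⟩⟩ <;>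
      simp only [AddSubgroup.vadd_def, vadd_eq_add, AddSubgroup.coe_neg, Pi.add_apply,
        Pi.neg_apply] <;>
      linarith [abs_le.1 (hdist j)]
  have hvol : volume (ZSpan.fundamentalDomain b) = ENNReal.ofReal |B.det| := by
    rw [ZSpan.volume_fundamentalDomain, ← det_transpose]
    congr
    ext i j
    simp [b, he, mulVec_single]
  have hle := hvol ▸
    (ZSpan.isAddFundamentalDomain' b volume).measure_le_of_iUnion_vadd_eq_univ hcover
  rw [Real.volume_Icc_pi, ← ENNReal.ofReal_prod_of_nonneg fun _ _ => by linarith,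
    ENNReal.ofReal_le_ofReal_iff (Finset.prod_nonneg fun _ _ => by linarith)] at hle
  simpa [two_mul] using hle

theorem determinant_lower_bound_general {m n : ℕ} (A : Matrix (Fin m) (Fin n) ℝ)
    (k : ℕ) (hk : 0 < k) (r : Fin k → Fin m) (c : Fin k → Fin n)
    (hc : Function.Injective c) :
    (1 / 2 : ℝ) * |(A.submatrix r c).det| ^ ((1 : ℝ) / k) ≤ matHerDisc A := by
  have hD := matHerDisc_nonneg A
  have hB := (herDiscLE_matHerDisc A).submatrix r hc
  have hdet : |(A.submatrix r c).det| ≤ (2 * matHerDisc A) ^ k := by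
    simpa using (A.submatrix r c).abs_det_le_of_forall_exists_intVec_near hD
      (hB.exists_intVec_near hD)
  have hroot : |(A.submatrix r c).det| ^ ((1 : ℝ) / k) ≤ 2 * matHerDisc A := by
    rwa [one_div, Real.rpow_inv_le_iff_of_pos (abs_nonneg _) (by positivity) (by positivity),
      Real.rpow_natCast]
  linarith

/-- determinant lower bound of Lovász–Spencer–Vesztergombi.
For any real `m × n` matrix `A`, `herdisc(A) ≥ (1/2) · max_k max_B |det B|^{1/k}`,
where `B` ranges over all `k × k` submatrices of `A` (given by injective row and
column selections `r`, `c`). -/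
theorem determinant_lower_bound {m n : ℕ} (A : Matrix (Fin m) (Fin n) ℝ)
    (k : ℕ) (hk : 0 < k) (r : Fin k → Fin m) (c : Fin k → Fin n)
    (hr : Function.Injective r) (hc : Function.Injective c) :
    (1 / 2 : ℝ) * |(A.submatrix r c).det| ^ ((1 : ℝ) / k) ≤ matHerDisc A :=
  determinant_lower_bound_general A k hk r c hc
end

section
/- For every positive integer d divisible by 8, the hereditary discrepancy of the set system S^d of subcubes of the boolean cube {0,1}^d satisfies herdisc(S^d) ≥ 2^{d/16}/(2e). -/
/-- The discrepancy of a set system `S` on a finite ground set `U`: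
`disc(S) = min_{f : U → {-1,+1}} max_{T ∈ S} |∑_{i ∈ T} f(i)|`. -/
noncomputable def sysDisc {U : Type*} [Fintype U] (S : Finset (Finset U)) : ℝ :=
  sInf {D : ℝ | ∃ f : U → ℝ, (∀ i, f i = 1 ∨ f i = -1) ∧
    D = ⨆ T : {T // T ∈ S}, |∑ i ∈ T.1, f i|}

/-- The hereditary discrepancy of a set system `S` on a finite ground set `U`:
`herdisc(S) = max_{W ⊆ U} disc(S|_W)`, where `S|_W = {T ∩ W : T ∈ S}`. -/
noncomputable def sysHerDisc {U : Type*} [Fintype U] [DecidableEq U]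
    (S : Finset (Finset U)) : ℝ :=
  sSup {D : ℝ | ∃ W : Finset U, D = sysDisc (S.image (fun T => T ∩ W))}

/-- For `v ∈ {0,1,*}^d` (where `*` is encoded as `none`), the subcube
`S_v = {u ∈ {0,1}^d : vᵢ ≠ * → uᵢ = vᵢ}`. -/
def subcube {d : ℕ} (v : Fin d → Option Bool) : Finset (Fin d → Bool) :=
  Finset.univ.filter (fun u => ∀ i : Fin d, ∀ b : Bool, v i = some b → u i = b)

/-- The set system `S^d` of all subcubes of the boolean cube `{0,1}^d`. -/
def cubeSystem (d : ℕ) : Finset (Finset (Fin d → Bool)) :=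
  Finset.univ.image (fun v : Fin d → Option Bool => subcube v)

/-!
Take `m = ⌊d/3⌋` blocks of three coordinates and restrict to the `4^m` points whose blocks are
all codewords `(a, b, a xor b)` of the parity code, the other coordinates being `0`. The
subcubes fixing one coordinate in each block (and all coordinates outside the blocks to `0`)
give `6^m` tests. For a `±1` colouring `F` of the points, the second moment
`∑_c (∑_{g ∈ c} F g)^2` is the quadratic form of `(2I + J)^{⊗m}`, because two distinct
codewords agree in exactly one position. This kernel dominates `2^m I`, so the second moment is
at least `2^m 4^m = 8^m` and some test has `(∑_{g ∈ c} F g)^2 ≥ (4/3)^m ≥ (2^{d/16}/(2e))^2`.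
-/

open Finset Function

section Discrepancy

variable {U : Type*} [Fintype U]

lemma sysDisc_le_card (S : Finset (Finset U)) : sysDisc S ≤ Fintype.card U := by
  refine csInf_le_of_le ⟨0, ?_⟩ ⟨fun _ => 1, fun _ => Or.inl rfl, rfl⟩ ?_
  · rintro _ ⟨f, -, rfl⟩
    exact Real.iSup_nonneg fun _ => abs_nonneg _
  · refine Real.iSup_le (fun T => ?_) (Nat.cast_nonneg _)
    simpa using T.1.card_le_univ

lemma le_sysDisc {S : Finset (Finset U)} {b : ℝ}
    (h : ∀ f : U → ℝ, (∀ i, f i = 1 ∨ f i = -1) → ∃ T ∈ S, b ≤ |∑ i ∈ T, f i|) :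
    b ≤ sysDisc S := by
  refine le_csInf ⟨_, fun _ => 1, fun _ => Or.inl rfl, rfl⟩ ?_
  rintro _ ⟨f, hf, rfl⟩
  obtain ⟨T, hT, hb⟩ := h f hf
  exact hb.trans <| le_ciSup (f := fun T : {T // T ∈ S} => |∑ i ∈ T.1, f i|)
    (Set.finite_range _).bddAbove ⟨T, hT⟩

variable [DecidableEq U]

lemma sysDisc_image_inter_le_sysHerDisc (S : Finset (Finset U)) (W : Finset U) :
    sysDisc (S.image (· ∩ W)) ≤ sysHerDisc S :=
  le_csSup ⟨Fintype.card U, by rintro _ ⟨W, rfl⟩; exact sysDisc_le_card _⟩ ⟨W, rfl⟩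

lemma le_sysHerDisc {S : Finset (Finset U)} (W : Finset U) {b : ℝ}
    (h : ∀ f : U → ℝ, (∀ i, f i = 1 ∨ f i = -1) → ∃ T ∈ S, b ≤ |∑ i ∈ T ∩ W, f i|) :
    b ≤ sysHerDisc S := by
  refine (le_sysDisc fun f hf => ?_).trans (sysDisc_image_inter_le_sysHerDisc S W)
  obtain ⟨T, hT, hb⟩ := h f hf
  exact ⟨T ∩ W, mem_image_of_mem _ hT, hb⟩

end Discrepancy

lemma sum_sum_ite_eq_mul_nonneg {β γ : Type*} [Fintype β] [Fintype γ] [DecidableEq γ]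
    (π : β → γ) (f : β → ℝ) :
    0 ≤ ∑ u, ∑ u', if π u = π u' then f u * f u' else 0 := by
  set G : γ → ℝ := fun r => ∑ u with π u = r, f u
  have h : ∑ u, ∑ u', (if π u = π u' then f u * f u' else 0) = ∑ r, G r ^ 2 :=
    calc ∑ u, ∑ u', (if π u = π u' then f u * f u' else 0)
        = ∑ u, f u * G (π u) := by
          simp only [G, mul_sum, sum_filter, mul_ite, mul_zero, eq_comm]
      _ = ∑ r, ∑ u with π u = r, f u * G r := by
          rw [← sum_fiberwise univ π]
          refine sum_congr rfl fun r _ => sum_congr rfl fun u hu => ?_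
          rw [(mem_filter.1 hu).2]
      _ = ∑ r, G r ^ 2 := by simp only [G, ← sum_mul, sq]
  exact h ▸ sum_nonneg fun r _ => sq_nonneg _

lemma two_pow_card_mul_sum_sq_le {ι α : Type*} [Fintype ι] [DecidableEq ι] [Fintype α]
    [DecidableEq α] (f : (ι → α) → ℝ) :
    2 ^ Fintype.card ι * ∑ u, f u ^ 2 ≤
      ∑ u, ∑ u', f u * f u' * ∏ j, if u j = u' j then 3 else 1 := by
  -- Expanding `∏ j, (1 + 2 [u j = u' j])` over subsets `A` makes the form a positive
  -- combination of the forms `Q A`, each a sum of squares over the fibres of `A.restrict`.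
  set Q : Finset ι → ℝ := fun A =>
    ∑ u, ∑ u', if A.restrict u = A.restrict u' then f u * f u' else 0
  have hexpand : ∀ u u' : ι → α, f u * f u' * ∏ j, (if u j = u' j then (3 : ℝ) else 1) =
      ∑ A ∈ univ.powerset, 2 ^ #A *
        if A.restrict u = A.restrict u' then f u * f u' else 0 := by
    intro u u'
    have h3 : ∀ j, (if u j = u' j then (3 : ℝ) else 1) = 1 + if u j = u' j then 2 else 0 := by
      intro j; split_ifs <;> norm_num
    simp only [h3, prod_one_add, prod_ite_zero, prod_const, mul_sum]
    refine sum_congr rfl fun A _ => ?_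
    have : (∀ j ∈ A, u j = u' j) ↔ A.restrict u = A.restrict u' := by
      simp [funext_iff]
    simp only [this]
    split_ifs <;> ring
  have hQ : ∀ A, 0 ≤ Q A := fun A => sum_sum_ite_eq_mul_nonneg A.restrict f
  have hQuniv : Q univ = ∑ u, f u ^ 2 := by
    have h : ∀ u u' : ι → α, univ.restrict u = univ.restrict u' ↔ u = u' := by
      simp [funext_iff]
    simp only [Q, h, sum_ite_eq, mem_univ, if_true, sq]
  calc 2 ^ Fintype.card ι * ∑ u, f u ^ 2 = 2 ^ #(univ : Finset ι) * Q univ := by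
        rw [hQuniv, card_univ]
    _ ≤ ∑ A ∈ univ.powerset, 2 ^ #A * Q A :=
        single_le_sum (fun A _ => mul_nonneg (pow_nonneg zero_le_two _) (hQ A))
          (mem_powerset_self _)
    _ = ∑ u, ∑ u', f u * f u' * ∏ j, if u j = u' j then 3 else 1 := by
        simp only [hexpand, Q, mul_sum]
        rw [sum_comm]
        exact sum_congr rfl fun u _ => sum_comm

lemma sum_sq_sum_filter_forall {ι β γ : Type*} [Fintype ι] [DecidableEq ι] [Fintype β]
    [Fintype γ] (χ : β → γ → Prop) [∀ b z, Decidable (χ b z)] (F : (ι → β) → ℝ) :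
    ∑ c : ι → γ, (∑ g with ∀ j, χ (g j) (c j), F g) ^ 2 =
      ∑ g, ∑ g', F g * F g' * ∏ j, (#{z | χ (g j) z ∧ χ (g' j) z} : ℝ) := by
  have hsq : ∀ c : ι → γ, (∑ g with ∀ j, χ (g j) (c j), F g) ^ 2 =
      ∑ g, ∑ g', F g * F g' * ∏ j, if χ (g j) (c j) ∧ χ (g' j) (c j) then 1 else 0 := by
    intro c
    rw [sum_filter, sq, sum_mul_sum]
    refine sum_congr rfl fun g _ => sum_congr rfl fun g' _ => ?_
    rw [prod_boole]
    by_cases hg : ∀ j, χ (g j) (c j) <;> by_cases hg' : ∀ j, χ (g' j) (c j) <;>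
      simp [hg, hg', forall_and]
  simp only [hsq]
  rw [sum_comm]
  refine sum_congr rfl fun g _ => ?_
  rw [sum_comm]
  refine sum_congr rfl fun g' _ => ?_
  rw [← mul_sum]
  simp only [natCast_card_filter]
  rw [Fintype.prod_sum fun j z => if χ (g j) z ∧ χ (g' j) z then (1 : ℝ) else 0]

def parityCode (p : Bool × Bool) : Fin 3 → Bool := ![p.1, p.2, xor p.1 p.2]

lemma card_parityCode_agree (p q : Bool × Bool) :
    #{z : Fin 3 × Bool | parityCode p z.1 = z.2 ∧ parityCode q z.1 = z.2} =
      if p = q then 3 else 1 := by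
  revert p q; decide

lemma exists_sq_le_sum_parityCode {ι : Type*} [Fintype ι] [DecidableEq ι]
    (F : (ι → Bool × Bool) → ℝ) (hF : ∀ g, F g = 1 ∨ F g = -1) :
    ∃ c : ι → Fin 3 × Bool,
      (4 / 3 : ℝ) ^ Fintype.card ι ≤
        (∑ g with ∀ j, parityCode (g j) (c j).1 = (c j).2, F g) ^ 2 := by
  have hF2 : ∑ g, F g ^ 2 = 4 ^ Fintype.card ι := by
    have h1 : ∀ g, F g ^ 2 = 1 := fun g => by rcases hF g with h | h <;> simp [h]
    simp [h1]
  have hmoment : ∑ _c : ι → Fin 3 × Bool, (4 / 3 : ℝ) ^ Fintype.card ι ≤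
      ∑ c : ι → Fin 3 × Bool, (∑ g with ∀ j, parityCode (g j) (c j).1 = (c j).2, F g) ^ 2 :=
    calc ∑ _c : ι → Fin 3 × Bool, (4 / 3 : ℝ) ^ Fintype.card ι
        = 2 ^ Fintype.card ι * ∑ g, F g ^ 2 := by
          rw [hF2, sum_const, card_univ, nsmul_eq_mul, ← mul_pow]
          norm_num [Fintype.card_fun, ← mul_pow]
      _ ≤ ∑ g, ∑ g', F g * F g' * ∏ j, if g j = g' j then 3 else 1 :=
          two_pow_card_mul_sum_sq_le F
      _ = _ := by
          have h :=
            sum_sq_sum_filter_forall (fun p (z : Fin 3 × Bool) => parityCode p z.1 = z.2) F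
          simp only [card_parityCode_agree] at h
          rw [h]
          simp [apply_ite]
  obtain ⟨c, -, hc⟩ := exists_le_of_sum_le univ_nonempty hmoment
  exact ⟨c, hc⟩

lemma subcube_mem_cubeSystem {d : ℕ} (v : Fin d → Option Bool) : subcube v ∈ cubeSystem d :=
  mem_image_of_mem _ (mem_univ _)

lemma extend_mem_subcube_extend_iff {d : ℕ} {κ : Type*} {e : κ → Fin d} (he : Injective e)
    (x : κ → Bool) (v : κ → Option Bool) :
    extend e x (fun _ => false) ∈ subcube (extend e v fun _ => some false) ↔
      ∀ k b, v k = some b → x k = b := by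
  simp only [subcube, mem_filter, mem_univ, true_and]
  constructor
  · intro h k b hv
    simpa [he.extend_apply] using h (e k) b (by rwa [he.extend_apply])
  · intro h i b hv
    by_cases hi : ∃ k, e k = i
    · obtain ⟨k, rfl⟩ := hi
      rw [he.extend_apply] at hv ⊢
      exact h k b hv
    · rw [extend_apply' _ _ _ hi] at hv ⊢
      exact Option.some_injective _ hv

noncomputable def parityPoint {d : ℕ} {ι : Type*} (e : ι × Fin 3 → Fin d)
    (g : ι → Bool × Bool) : Fin d → Bool :=
  extend e (fun k => parityCode (g k.1) k.2) fun _ => false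

noncomputable def parityTest {d : ℕ} {ι : Type*} (e : ι × Fin 3 → Fin d)
    (c : ι → Fin 3 × Bool) : Fin d → Option Bool :=
  extend e (fun k => if k.2 = (c k.1).1 then some (c k.1).2 else none) fun _ => some false

section ParityEmbedding

variable {d : ℕ} {ι : Type*} {e : ι × Fin 3 → Fin d}

lemma parityPoint_injective (he : Injective e) : Injective (parityPoint e) := by
  intro g g' h
  funext j
  have h0 := congrFun h (e (j, 0))
  have h1 := congrFun h (e (j, 1))
  simp only [parityPoint, he.extend_apply, parityCode] at h0 h1
  exact Prod.ext h0 h1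

lemma parityPoint_mem_subcube_parityTest_iff (he : Injective e) (g : ι → Bool × Bool)
    (c : ι → Fin 3 × Bool) :
    parityPoint e g ∈ subcube (parityTest e c) ↔ ∀ j, parityCode (g j) (c j).1 = (c j).2 := by
  rw [parityPoint, parityTest, extend_mem_subcube_extend_iff he]
  constructor
  · intro h j
    exact h (j, (c j).1) _ (if_pos rfl)
  · rintro h ⟨j, t⟩ b hb
    dsimp only at hb ⊢
    split_ifs at hb with ht
    subst ht
    obtain rfl := Option.some_injective _ hb
    exact h j

lemma sum_subcube_parityTest_inter [Fintype ι] [DecidableEq ι] (he : Injective e)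
    (c : ι → Fin 3 × Bool) (f : (Fin d → Bool) → ℝ) :
    ∑ x ∈ subcube (parityTest e c) ∩ univ.image (parityPoint e), f x =
      ∑ g with ∀ j, parityCode (g j) (c j).1 = (c j).2, f (parityPoint e g) := by
  have h : subcube (parityTest e c) ∩ univ.image (parityPoint e) =
      Finset.image (parityPoint e) {g | ∀ j, parityCode (g j) (c j).1 = (c j).2} := by
    ext x
    simp only [mem_inter, mem_image, mem_filter, mem_univ, true_and]
    constructor
    · rintro ⟨hx, g, rfl⟩
      exact ⟨g, (parityPoint_mem_subcube_parityTest_iff he g c).1 hx, rfl⟩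
    · rintro ⟨g, hg, rfl⟩
      exact ⟨(parityPoint_mem_subcube_parityTest_iff he g c).2 hg, g, rfl⟩
  rw [h, sum_image fun g _ g' _ hgg' => parityPoint_injective he hgg']

end ParityEmbedding

lemma two_rpow_div_two_exp_sq_le (d : ℕ) :
    ((2 : ℝ) ^ ((d : ℝ) / 16) / (2 * Real.exp 1)) ^ 2 ≤ (4 / 3) ^ (d / 3) := by
  set m := d / 3
  have hd : (d : ℝ) ≤ 3 * m + 2 := by exact_mod_cast (by omega : d ≤ 3 * m + 2)
  have h38 : (2 : ℝ) ^ ((3 : ℝ) / 8) ≤ 4 / 3 := by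
    refine le_of_pow_le_pow_left₀ (n := 8) (by norm_num) (by norm_num) ?_
    rw [← Real.rpow_natCast, ← Real.rpow_mul zero_le_two]
    norm_num
  have h14 : (2 : ℝ) ^ ((1 : ℝ) / 4) ≤ 2 :=
    (Real.rpow_le_rpow_of_exponent_le one_le_two (by norm_num)).trans_eq (Real.rpow_one 2)
  have he : (16 : ℝ) ≤ (2 * Real.exp 1) ^ 2 := by
    nlinarith [Real.add_one_le_exp (1 : ℝ)]
  calc ((2 : ℝ) ^ ((d : ℝ) / 16) / (2 * Real.exp 1)) ^ 2
      = (2 : ℝ) ^ ((d : ℝ) / 8) / (2 * Real.exp 1) ^ 2 := by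
        rw [div_pow, ← Real.rpow_natCast, ← Real.rpow_mul zero_le_two]
        ring_nf
    _ ≤ (2 : ℝ) ^ ((3 : ℝ) / 8 * m + 1 / 4) / 16 :=
        div_le_div₀ (by positivity)
          (Real.rpow_le_rpow_of_exponent_le one_le_two (by linarith)) (by norm_num) he
    _ = ((2 : ℝ) ^ ((3 : ℝ) / 8)) ^ m * 2 ^ ((1 : ℝ) / 4) / 16 := by
        rw [Real.rpow_add two_pos, Real.rpow_mul zero_le_two, Real.rpow_natCast]
    _ ≤ (4 / 3) ^ m * 2 / 16 := by gcongr
    _ ≤ (4 / 3) ^ m := by linarith [pow_nonneg (by norm_num : (0 : ℝ) ≤ 4 / 3) m]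

theorem cubeSystem_herdisc_lower_bound_general (d : ℕ) :
    (2 : ℝ) ^ ((d : ℝ) / 16) / (2 * Real.exp 1) ≤ sysHerDisc (cubeSystem d) := by
  obtain ⟨e⟩ : Nonempty (Fin (d / 3) × Fin 3 ↪ Fin d) :=
    Embedding.nonempty_of_card_le <| by
      simp only [Fintype.card_prod, Fintype.card_fin]; omega
  refine le_sysHerDisc (univ.image (parityPoint e)) fun f hf => ?_
  obtain ⟨c, hc⟩ := exists_sq_le_sum_parityCode (fun g => f (parityPoint e g)) fun _ => hf _
  refine ⟨_, subcube_mem_cubeSystem (parityTest e c), ?_⟩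
  rw [sum_subcube_parityTest_inter e.injective]
  rw [Fintype.card_fin] at hc
  exact (le_abs_self _).trans (sq_le_sq.1 ((two_rpow_div_two_exp_sq_le d).trans hc))

/-- For every positive integer `d` divisible by `8`,
`herdisc(S^d) ≥ 2^{d/16} / (2e)`. -/
theorem cubeSystem_herdisc_lower_bound (d : ℕ) (hd : 0 < d) (h8 : 8 ∣ d) :
    (2 : ℝ) ^ ((d : ℝ) / 16) / (2 * Real.exp 1) ≤ sysHerDisc (cubeSystem d) :=
  cubeSystem_herdisc_lower_bound_general d
end

section
/- Let d be a positive integer, let p_{1,0} < p_{1,1} < … < p_{d,0} < p_{d,1} be the first 2d primes, and for u ∈ {0,1}^d define b_u = Π_{i=1}^d p_{i, u_i}. For v ∈ {0,1,*}^d define a_v = Π_{i : v_i ≠ *} p_{i, v_i}. Then for every u ∈ {0,1}^d and v ∈ {0,1,*}^d, a_v divides b_u if and only if u ∈ S_v. -/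
/-- The first `2d` primes in increasing order, organized into `d` consecutive
pairs: `p_{i,b}` is the `(2i + b)`-th prime (0-indexed), so
`p_{1,0} < p_{1,1} < … < p_{d,0} < p_{d,1}`. -/
noncomputable def pPrime {d : ℕ} (i : Fin d) (b : Bool) : ℕ :=
  Nat.nth Nat.Prime (2 * (i : ℕ) + if b then 1 else 0)

/-- For `u ∈ {0,1}^d`, the squarefree integer `b_u = ∏_{i=1}^d p_{i, uᵢ}`. -/
noncomputable def bOf {d : ℕ} (u : Fin d → Bool) : ℕ :=
  ∏ i : Fin d, pPrime i (u i)

/-- For `v ∈ {0,1,*}^d` (where `*` is encoded as `none`), the integer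
`a_v = ∏_{i : vᵢ ≠ *} p_{i, vᵢ}`. -/
noncomputable def aOf {d : ℕ} (v : Fin d → Option Bool) : ℕ :=
  ∏ i : Fin d, (v i).elim 1 (fun b => pPrime i b)

/-! The primes `p_{i,b}` are pairwise distinct, so `p_{i,b}` divides the squarefree number `b_u`
exactly when `uᵢ = b`. Since `a_v` is the product of the `p_{i,vᵢ}` over the fixed coordinates of
`v`, it divides `b_u` exactly when `u` agrees with `v` there. -/

section

variable {d : ℕ}

lemma pPrime_prime (i : Fin d) (b : Bool) : (pPrime i b).Prime :=
  Nat.nth_mem_of_infinite Nat.infinite_setOfPred_prime _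

lemma pPrime_eq_pPrime_iff {i j : Fin d} {b c : Bool} :
    pPrime i b = pPrime j c ↔ i = j ∧ b = c := by
  refine ⟨fun h => ?_, fun ⟨hij, hbc⟩ => hij ▸ hbc ▸ rfl⟩
  have hindex := Nat.nth_injective Nat.infinite_setOfPred_prime h
  cases b <;> cases c <;> simp only [Bool.false_eq_true, ite_false, ite_true] at hindex <;>
    first | exact ⟨Fin.ext (by omega), rfl⟩ | omega

lemma pPrime_dvd_aOf {v : Fin d → Option Bool} {i : Fin d} {b : Bool}
    (hvi : v i = some b) : pPrime i b ∣ aOf v := by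
  simpa [aOf, hvi] using Finset.dvd_prod_of_mem (fun j => (v j).elim 1 (pPrime j))
    (Finset.mem_univ i)

lemma pPrime_dvd_bOf_iff {u : Fin d → Bool} {i : Fin d} {b : Bool} :
    pPrime i b ∣ bOf u ↔ u i = b := by
  constructor
  · intro hdvd
    obtain ⟨j, -, hj⟩ := (pPrime_prime i b).prime.exists_mem_finset_dvd hdvd
    obtain ⟨rfl, rfl⟩ := pPrime_eq_pPrime_iff.1 <|
      (Nat.prime_dvd_prime_iff_eq (pPrime_prime i b) (pPrime_prime j (u j))).1 hj
    rfl
  · rintro rfl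
    exact Finset.dvd_prod_of_mem (fun j => pPrime j (u j)) (Finset.mem_univ i)

lemma mem_subcube_iff {u : Fin d → Bool} {v : Fin d → Option Bool} :
    u ∈ subcube v ↔ ∀ i b, v i = some b → u i = b := by
  simp [subcube]

lemma aOf_dvd_bOf_of_mem_subcube {u : Fin d → Bool} {v : Fin d → Option Bool}
    (hu : u ∈ subcube v) : aOf v ∣ bOf u := by
  refine Finset.prod_dvd_prod_of_dvd _ _ fun i _ => ?_
  cases hvi : v i with
  | none => exact one_dvd _
  | some b => exact (mem_subcube_iff.1 hu i b hvi).symm ▸ dvd_rfl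

end

theorem aOf_dvd_bOf_iff_mem_subcube_general (d : ℕ)
    (u : Fin d → Bool) (v : Fin d → Option Bool) :
    aOf v ∣ bOf u ↔ u ∈ subcube v :=
  ⟨fun hdvd => mem_subcube_iff.2 fun _ _ hvi =>
      pPrime_dvd_bOf_iff.1 ((pPrime_dvd_aOf hvi).trans hdvd),
    aOf_dvd_bOf_of_mem_subcube⟩

/-- For every positive integer `d`, every `u ∈ {0,1}^d` and
every `v ∈ {0,1,*}^d`: `a_v ∣ b_u ↔ u ∈ S_v`. -/
theorem aOf_dvd_bOf_iff_mem_subcube (d : ℕ) (hd : 0 < d)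
    (u : Fin d → Bool) (v : Fin d → Option Bool) :
    aOf v ∣ bOf u ↔ u ∈ subcube v :=
  aOf_dvd_bOf_iff_mem_subcube_general d u v
end
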